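/- Let z₁, …, zₙ be distinct complex numbers with p(zᵢ) = zᵢ and p'(zᵢ) = αᵢ. For 2 ≤ k ≤ n - 1, the divided difference satisfies f[z₁, z₁, …, z_k, z_k, z_{k+1}] = Σ_{i=1}^{k} (αᵢ - 1)(zᵢ - z_{k+1})/π^{k+1}_i, where π^{k+1}_i = ∏_{j=1, j≠i}^{k+1} (zᵢ - zⱼ)². -/

import Mathlib

open Polynomial Finset

/-- Divided differences with possibly repeated (adjacent) nodes:
`g` gives the function values and `d` the derivative values at doubled nodes. -/
noncomputable def dd (g d : ℂ → ℂ) : List ℂ → ℂ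
  | [] => 0
  | [z] => g z
  | [z, w] => if z = w then d z else (g w - g z) / (w - z)
  | z :: w :: u :: rest =>
    (dd g d (w :: u :: rest) - dd g d ((z :: w :: u :: rest).dropLast)) /
      ((u :: rest).getLast (by simp) - z)
termination_by l => l.length

/-!
Write `p = f + id`. Divided differences are linear and those of the identity of order `≥ 2`
vanish, so only `f` matters, and `f` vanishes at every node with `f' (z i) = α i - 1`. For such an
`f`, the divided difference over any consecutive window of `z 0, z 0, z 1, z 1, …` is
`∑ (α i - 1) / ∏_{j ≠ i} (z i - z j) ^ m j`, summed over the nodes `i` occurring twice, `m j` being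
the multiplicity of `z j` in the window: dropping one copy of `z A` multiplies the `i`-th term by
`z i - z A`, so the difference of the two sub-windows is `(z B - z A)` times the sum, which is the
divided-difference recursion. The theorem is the window in which `z k` occurs once.
-/

theorem dd_of_three_le_length (g d : ℂ → ℂ) (L : List ℂ) (h : 3 ≤ L.length) :
    dd g d L = (dd g d L.tail - dd g d L.dropLast) /
      (L.getLast (List.ne_nil_of_length_pos (by omega)) -
        L.head (List.ne_nil_of_length_pos (by omega))) := by
  match L with
  | a :: b :: c :: rest => rw [dd]; rfl

theorem dd_add (g₁ d₁ g₂ d₂ : ℂ → ℂ) : ∀ L : List ℂ,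
    dd (fun w => g₁ w + g₂ w) (fun w => d₁ w + d₂ w) L = dd g₁ d₁ L + dd g₂ d₂ L
  | [] => by simp [dd]
  | [a] => by simp [dd]
  | [a, b] => by
    simp only [dd]
    split <;> ring
  | a :: b :: c :: rest => by
    rw [dd, dd, dd, dd_add g₁ d₁ g₂ d₂ (b :: c :: rest),
      dd_add g₁ d₁ g₂ d₂ ((a :: b :: c :: rest).dropLast)]
    ring
termination_by L => L.length

theorem dd_id_pair (a b : ℂ) : dd (fun w => w) (fun _ => 1) [a, b] = 1 := by
  rw [dd]
  split_ifs with h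
  · rfl
  · exact div_self (sub_ne_zero.mpr (Ne.symm h))

theorem dd_id_of_three_le_length : ∀ L : List ℂ, 3 ≤ L.length →
    dd (fun w => w) (fun _ => 1) L = 0
  | a :: b :: c :: rest, _ => by
    rw [dd]
    match rest with
    | [] => simp [dd_id_pair, List.dropLast]
    | x :: xs =>
      rw [dd_id_of_three_le_length (b :: c :: x :: xs) (by simp),
        show (a :: b :: c :: x :: xs).dropLast = a :: b :: (c :: x :: xs).dropLast from rfl,
        dd_id_of_three_le_length (a :: b :: (c :: x :: xs).dropLast) (by simp)]
      simp
termination_by L => L.length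
decreasing_by
  · simp
  · simp [List.length_dropLast]

theorem dd_sub_id (g d : ℂ → ℂ) (L : List ℂ) (h : 3 ≤ L.length) :
    dd (fun w => g w - w) (fun w => d w - 1) L = dd g d L := by
  have := dd_add (fun w => g w - w) (fun w => d w - 1) (fun w => w) (fun _ => 1) L
  simp only [sub_add_cancel] at this
  rw [this, dd_id_of_three_le_length L h, add_zero]

section HermiteSum

variable (z β : ℕ → ℂ) (s : Finset ℕ)

/-- The divided difference of a function vanishing at the nodes `z i`, `i ∈ s`, with derivative
`β i` there, on nodes taken with multiplicities `m i ∈ {0, 1, 2}`. -/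
noncomputable def hermiteSum (m : ℕ → ℕ) : ℂ :=
  ∑ i ∈ s with m i = 2, β i / ∏ j ∈ s.erase i, (z i - z j) ^ m j

variable {z β s}

theorem hermiteSum_eq_zero {m : ℕ → ℕ} (hm : ∀ i ∈ s, m i ≠ 2) : hermiteSum z β s m = 0 :=
  sum_eq_zero fun i hi => absurd (mem_filter.mp hi).2 (hm i (mem_filter.mp hi).1)

theorem hermiteSum_eq_single {m : ℕ → ℕ} {c : ℕ} (hc : c ∈ s) (hmc : m c = 2)
    (hm : ∀ j ∈ s, j ≠ c → m j = 0) : hermiteSum z β s m = β c := by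
  have hfilter : {i ∈ s | m i = 2} = {c} := by
    ext i
    simp only [mem_filter, mem_singleton]
    constructor
    · rintro ⟨hi, hmi⟩
      by_contra hic
      simp [hm i hi hic] at hmi
    · rintro rfl
      exact ⟨hc, hmc⟩
  rw [hermiteSum, hfilter, sum_singleton, prod_eq_one, div_one]
  intro j hj
  rw [hm j (mem_of_mem_erase hj) (ne_of_mem_erase hj), pow_zero]

/-- The `A`-th term, dropped from the sum when `m A = 2`, is matched on the right by the vanishing
factor `z A - z A`. -/
theorem hermiteSum_sub_single (hz : Set.InjOn z s) {m : ℕ → ℕ} {A : ℕ} (hA : A ∈ s)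
    (hmA : 1 ≤ m A) (hmA' : m A ≤ 2) :
    hermiteSum z β s (fun j => m j - if j = A then 1 else 0) =
      ∑ i ∈ s with m i = 2, β i / (∏ j ∈ s.erase i, (z i - z j) ^ m j) * (z i - z A) := by
  have hfilter : {i ∈ s | m i - (if i = A then 1 else 0) = 2} = {i ∈ s | m i = 2}.erase A := by
    ext i
    simp only [mem_filter, mem_erase]
    by_cases hiA : i = A
    · subst hiA; simp; omega
    · simp [hiA]
  rw [hermiteSum, hfilter, ← sum_erase {i ∈ s | m i = 2}
    (f := fun i => β i / (∏ j ∈ s.erase i, (z i - z j) ^ m j) * (z i - z A)) (a := A)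
    (by simp only [sub_self, mul_zero])]
  refine sum_congr rfl fun i hi => ?_
  obtain ⟨hiA, hi⟩ := mem_erase.mp hi
  have his : i ∈ s := (mem_filter.mp hi).1
  have hzA : z i - z A ≠ 0 := sub_ne_zero.mpr fun h => hiA (hz his hA h)
  have hprod : ∏ j ∈ s.erase i, (z i - z j) ^ m j =
      (∏ j ∈ s.erase i, (z i - z j) ^ (m j - if j = A then 1 else 0)) * (z i - z A) := by
    have hsplit : ∀ j, (z i - z j) ^ m j = (z i - z j) ^ (m j - if j = A then 1 else 0) *
        (if j = A then z i - z j else 1) := by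
      intro j
      split_ifs with hj
      · subst hj; rw [← pow_succ]; congr 1; omega
      · simp
    rw [prod_congr rfl fun j _ => hsplit j, prod_mul_distrib, prod_ite_eq']
    simp [hA, Ne.symm hiA]
  rw [hprod, div_mul_eq_mul_div, mul_div_mul_right _ _ hzA]

theorem hermiteSum_sub_sub (hz : Set.InjOn z s) {m : ℕ → ℕ} {A B : ℕ} (hA : A ∈ s) (hB : B ∈ s)
    (hmA : 1 ≤ m A) (hmA' : m A ≤ 2) (hmB : 1 ≤ m B) (hmB' : m B ≤ 2) :
    hermiteSum z β s (fun j => m j - if j = A then 1 else 0) -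
        hermiteSum z β s (fun j => m j - if j = B then 1 else 0) =
      (z B - z A) * hermiteSum z β s m := by
  rw [hermiteSum_sub_single hz hA hmA hmA', hermiteSum_sub_single hz hB hmB hmB', hermiteSum,
    ← sum_sub_distrib, mul_sum]
  exact sum_congr rfl fun i _ => by ring

end HermiteSum

section DoubledWindow

def doubledWindow (z : ℕ → ℂ) (a n : ℕ) : List ℂ :=
  (List.range' a n).map fun t => z (t / 2)

/-- The multiplicity of `z j` in `doubledWindow z a n`, i.e. the number of `t ∈ [a, a + n)` with
`t / 2 = j`. -/
def windowMult (a n j : ℕ) : ℕ := min (a + n) (2 * j + 2) - max a (2 * j)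

variable (z : ℕ → ℂ)

theorem doubledWindow_succ (a n : ℕ) :
    doubledWindow z a (n + 1) = z (a / 2) :: doubledWindow z (a + 1) n := by
  rw [doubledWindow, List.range'_succ]; rfl

theorem doubledWindow_dropLast (a n : ℕ) :
    (doubledWindow z a (n + 1)).dropLast = doubledWindow z a n := by
  simp [doubledWindow, List.range'_concat, List.map_append]

theorem doubledWindow_getLast (a n : ℕ) (h : doubledWindow z a (n + 1) ≠ []) :
    (doubledWindow z a (n + 1)).getLast h = z ((a + n) / 2) := by
  simp [doubledWindow, List.getLast_eq_getElem]

theorem flatMap_pair_eq_doubledWindow (k : ℕ) :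
    (List.range k).flatMap (fun i => [z i, z i]) = doubledWindow z 0 (2 * k) := by
  induction k with
  | zero => rfl
  | succ k ih =>
    rw [List.range_succ, List.flatMap_append, ih, doubledWindow, doubledWindow,
      show 2 * (k + 1) = 2 * k + 1 + 1 by ring, List.range'_concat, List.range'_concat]
    simp only [List.map_append, List.flatMap_cons, List.flatMap_nil, List.append_nil,
      List.map_cons, List.map_nil, List.append_assoc, List.cons_append, List.nil_append]
    rw [show (0 + 1 * (2 * k)) / 2 = k by omega, show (0 + 1 * (2 * k + 1)) / 2 = k by omega]

theorem dd_doubledWindow_succ_succ_succ (g d : ℂ → ℂ) (a n : ℕ) :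
    dd g d (doubledWindow z a (n + 3)) =
      (dd g d (doubledWindow z (a + 1) (n + 2)) - dd g d (doubledWindow z a (n + 2))) /
        (z ((a + n + 2) / 2) - z (a / 2)) := by
  rw [dd_of_three_le_length g d _ (by simp [doubledWindow]), doubledWindow_dropLast,
    doubledWindow_getLast]
  simp only [doubledWindow_succ, List.tail_cons, List.head_cons]
  rfl

theorem dd_doubledWindow_two {f f' : ℂ → ℂ} {β : ℕ → ℂ} {k : ℕ}
    (hz : Set.InjOn z (range (k + 1))) (hf : ∀ i ≤ k, f (z i) = 0)
    (hf' : ∀ i ≤ k, f' (z i) = β i) (a : ℕ) (ha : a + 2 ≤ 2 * k + 2) :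
    dd f f' (doubledWindow z a 2) = hermiteSum z β (range (k + 1)) (windowMult a 2) := by
  obtain ⟨c, rfl | rfl⟩ := Nat.even_or_odd' a
  · have hlist : doubledWindow z (2 * c) 2 = [z c, z c] := by
      simp [doubledWindow, List.range']
      congr 1; omega
    rw [hlist, dd, if_pos rfl, hf' c (by omega),
      hermiteSum_eq_single (c := c) (by simp; omega) (by simp only [windowMult]; omega)
        fun j _ hj => by simp only [windowMult]; omega]
  · have hlist : doubledWindow z (2 * c + 1) 2 = [z c, z (c + 1)] := by
      simp [doubledWindow, List.range']
      constructor <;> congr 1 <;> omega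
    have hne : z c ≠ z (c + 1) := fun h => by
      have := hz (mem_coe.mpr (mem_range.mpr (by omega))) (mem_coe.mpr (mem_range.mpr (by omega))) h
      omega
    rw [hlist, dd, if_neg hne, hf c (by omega), hf (c + 1) (by omega),
      hermiteSum_eq_zero fun i _ => by simp [windowMult]; omega]
    simp

theorem dd_doubledWindow {f f' : ℂ → ℂ} {β : ℕ → ℂ} {k : ℕ} (hz : Set.InjOn z (range (k + 1)))
    (hf : ∀ i ≤ k, f (z i) = 0) (hf' : ∀ i ≤ k, f' (z i) = β i) :
    ∀ n a, a + n ≤ 2 * k + 2 →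
      dd f f' (doubledWindow z a n) = hermiteSum z β (range (k + 1)) (windowMult a n) := by
  intro n
  induction n using Nat.strong_induction_on with
  | _ n ih =>
  intro a ha
  obtain _ | _ | _ | n := n
  · rw [hermiteSum_eq_zero fun i _ => by simp [windowMult]]
    simp [doubledWindow, dd]
  · rw [hermiteSum_eq_zero fun i _ => by simp only [windowMult]; omega]
    simp [doubledWindow, dd, hf (a / 2) (by omega)]
  · exact dd_doubledWindow_two z hz hf hf' a ha
  have hfront : windowMult (a + 1) (n + 2) =
      fun j => windowMult a (n + 3) j - if j = a / 2 then 1 else 0 := by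
    funext j; simp only [windowMult]; split_ifs <;> omega
  have hback : windowMult a (n + 2) =
      fun j => windowMult a (n + 3) j - if j = (a + n + 2) / 2 then 1 else 0 := by
    funext j; simp only [windowMult]; split_ifs <;> omega
  have hfirst : a / 2 ∈ range (k + 1) := mem_range.mpr (by omega)
  have hlast : (a + n + 2) / 2 ∈ range (k + 1) := mem_range.mpr (by omega)
  have hne : z ((a + n + 2) / 2) - z (a / 2) ≠ 0 := fun h => by
    have := hz (mem_coe.mpr hlast) (mem_coe.mpr hfirst) (sub_eq_zero.mp h)
    omega
  rw [dd_doubledWindow_succ_succ_succ, ih (n + 2) (by omega) (a + 1) (by omega),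
    ih (n + 2) (by omega) a (by omega), hfront, hback,
    hermiteSum_sub_sub hz hfirst hlast
      (by simp only [windowMult]; omega) (by simp only [windowMult]; omega)
      (by simp only [windowMult]; omega) (by simp only [windowMult]; omega),
    mul_div_cancel_left₀ _ hne]

end DoubledWindow

/-- The multiplicities of `z 0, z 0, …, z (k-1), z (k-1), z k` are `2 - [j = k]` on `j ≤ k`,
so this is `hermiteSum_sub_single` with all multiplicities `2` and `A = k`. -/
theorem hermiteSum_windowMult_doubled_add_one (z β : ℕ → ℂ) (k : ℕ)
    (hz : Set.InjOn z (range (k + 1))) :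
    hermiteSum z β (range (k + 1)) (windowMult 0 (2 * k + 1)) =
      ∑ i ∈ range k, β i * (z i - z k) / ∏ j ∈ (range (k + 1)).erase i, (z i - z j) ^ 2 := by
  have hmult : windowMult 0 (2 * k + 1) =
      fun j => (if j ≤ k then 2 else 0) - if j = k then 1 else 0 := by
    funext j; simp only [windowMult]; split_ifs <;> omega
  rw [hmult, hermiteSum_sub_single hz (by simp) (by simp) (by simp),
    filter_true_of_mem fun i hi => by simp at hi; simp; omega, sum_range_succ, sub_self,
    mul_zero, add_zero]
  refine sum_congr rfl fun i hi => ?_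
  have hle : ∀ j ∈ (range (k + 1)).erase i, j ≤ k := fun j hj =>
    Nat.lt_succ_iff.mp (mem_range.mp (mem_of_mem_erase hj))
  rw [prod_congr rfl fun j hj => by rw [if_pos (hle j hj)], div_mul_eq_mul_div]

/-- Statement (7): `f[z₁,z₁,…,z_k,z_k,z_{k+1}] = Σ_{i=1}^k (αᵢ-1)(zᵢ-z_{k+1})/πᵢ^{k+1}`.
(Indices `0,…,k`.) -/
theorem divided_difference_doubled_plus_one (n : ℕ) (p : ℂ[X]) (z : ℕ → ℂ)
    (hz : ∀ i < n, ∀ j < n, z i = z j → i = j)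
    (hfix : ∀ i < n, p.eval (z i) = z i)
    (α : ℕ → ℂ) (hα : ∀ i < n, p.derivative.eval (z i) = α i) :
    ∀ k, 2 ≤ k → k ≤ n - 1 →
      dd (fun w => p.eval w) (fun w => p.derivative.eval w)
          (((List.range k).flatMap fun i => [z i, z i]) ++ [z k]) =
        ∑ i ∈ Finset.range k,
          (α i - 1) * (z i - z k) /
            ∏ j ∈ (Finset.range (k + 1)).erase i, (z i - z j) ^ 2 := by
  intro k hk2 hkn
  have hzk : Set.InjOn z (range (k + 1)) := fun i hi j hj h =>
    hz i (by simp at hi; omega) j (by simp at hj; omega) h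
  have hlist : ((List.range k).flatMap fun i => [z i, z i]) ++ [z k] =
      doubledWindow z 0 (2 * k + 1) := by
    rw [flatMap_pair_eq_doubledWindow, doubledWindow, doubledWindow, List.range'_concat,
      List.map_append]
    simp
  rw [hlist, ← dd_sub_id _ _ _ (by simp [doubledWindow]; omega),
    dd_doubledWindow z hzk (β := fun i => α i - 1)
      (fun i hi => by rw [hfix i (by omega), sub_self])
      (fun i hi => by rw [hα i (by omega)]) (2 * k + 1) 0 (by omega),
    hermiteSum_windowMult_doubled_add_one z _ k hzk]
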